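/- arXiv:1405.4478 — 3 statements merged into one kernel-verified Lean document; each statement's English description precedes it below -/
import Mathlib

section
/- In the algebra generated by e and f with relation e·f = q·f·e + 1, for all m, n with m ≤ n the identity eᵐ·fⁿ = ∑_{k=0}^{m} binom(m,k)_q · q^((m-k)(n-k)) · ((n)_q!/(n-k)_q!) · f^(n-k)·e^(m-k) holds. -/
open Finset

/-- The `q`-integer. -/
noncomputable def qInt (q : ℂ) (n : ℕ) : ℂ := ∑ i ∈ Finset.range n, q ^ i

/-- The `q`-factorial. -/
noncomputable def qFact (q : ℂ) : ℕ → ℂ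
  | 0 => 1
  | n + 1 => qFact q n * qInt q (n + 1)

/-- The Gaussian binomial coefficient. -/
noncomputable def qBinom (q : ℂ) (n k : ℕ) : ℂ := qFact q n / (qFact q k * qFact q (n - k))

/-!
Multiply `eᵐ fⁿ = ∑ₖ cₘₖ fⁿ⁻ᵏ eᵐ⁻ᵏ` on the left by `e` and move `e` past `fⁿ⁻ᵏ` with
`e fʲ = qʲ fʲ e + [j] fʲ⁻¹`. Collecting the terms with `fⁿ⁻ᵏ eᵐ⁺¹⁻ᵏ` gives a recurrence for the
coefficients which, after cancelling the common factor `q^((m-k)(n-k-1)) [n]!/[n-k-1]!`, is the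
`q`-Pascal rule `[m+1, k+1] = [m, k+1] + q^(m-k) [m, k]`.
-/

section QNumbers

variable {q : ℂ}

theorem qFact_succ (n : ℕ) : qFact q (n + 1) = qFact q n * qInt q (n + 1) := rfl

theorem qInt_succ (n : ℕ) : qInt q (n + 1) = qInt q n + q ^ n :=
  Finset.sum_range_succ _ _

theorem qInt_add (a b : ℕ) : qInt q (a + b) = qInt q a + q ^ a * qInt q b := by
  simp [qInt, Finset.sum_range_add, pow_add, Finset.mul_sum]

theorem qInt_ne_zero (hq : ∀ n : ℕ, 0 < n → q ^ n ≠ 1) {n : ℕ} (hn : 0 < n) : qInt q n ≠ 0 := by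
  intro h0
  have hgeom : qInt q n * (q - 1) = q ^ n - 1 := geom_sum_mul q n
  rw [h0, zero_mul] at hgeom
  exact hq n hn (sub_eq_zero.mp hgeom.symm)

theorem qFact_ne_zero (hq : ∀ n : ℕ, 0 < n → q ^ n ≠ 1) (n : ℕ) : qFact q n ≠ 0 := by
  induction n with
  | zero => exact one_ne_zero
  | succ n ih => exact mul_ne_zero ih (qInt_ne_zero hq n.succ_pos)

theorem qFact_div_qFact_succ_mul_qInt (hq : ∀ n : ℕ, 0 < n → q ^ n ≠ 1) (n j : ℕ) :
    qFact q n / qFact q (j + 1) * qInt q (j + 1) = qFact q n / qFact q j := by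
  have := qFact_ne_zero hq j
  have := qInt_ne_zero hq j.succ_pos
  rw [qFact_succ]
  field_simp

theorem qBinom_zero_right (hq : ∀ n : ℕ, 0 < n → q ^ n ≠ 1) (m : ℕ) : qBinom q m 0 = 1 := by
  rw [qBinom, Nat.sub_zero, qFact, one_mul, div_self (qFact_ne_zero hq m)]

theorem qBinom_self (hq : ∀ n : ℕ, 0 < n → q ^ n ≠ 1) (m : ℕ) : qBinom q m m = 1 := by
  rw [qBinom, Nat.sub_self, qFact, mul_one, div_self (qFact_ne_zero hq m)]

theorem qBinom_succ_succ (hq : ∀ n : ℕ, 0 < n → q ^ n ≠ 1) {m k : ℕ} (hk : k < m) :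
    qBinom q (m + 1) (k + 1) = qBinom q m (k + 1) + q ^ (m - k) * qBinom q m k := by
  obtain ⟨u, rfl⟩ : ∃ u, m = k + 1 + u := ⟨m - (k + 1), by omega⟩
  have hsub₁ : k + 1 + u + 1 - (k + 1) = u + 1 := by omega
  have hsub₂ : k + 1 + u - (k + 1) = u := by omega
  have hsub₃ : k + 1 + u - k = u + 1 := by omega
  have hsplit : qInt q (k + 1 + u + 1) = qInt q (u + 1) + q ^ (u + 1) * qInt q (k + 1) := by
    rw [← qInt_add]; ring_nf
  simp only [qBinom, hsub₁, hsub₂, hsub₃]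
  rw [qFact_succ, hsplit, qFact_succ, qFact_succ u]
  have := qFact_ne_zero hq k
  have := qFact_ne_zero hq u
  have := qInt_ne_zero hq k.succ_pos
  have := qInt_ne_zero hq u.succ_pos
  field_simp

end QNumbers

/-- The coefficient of `fⁿ⁻ᵏ eᵐ⁻ᵏ` in the normal ordering of `eᵐ fⁿ`. -/
noncomputable def normalOrderCoeff (q : ℂ) (m n k : ℕ) : ℂ :=
  qBinom q m k * q ^ ((m - k) * (n - k)) * (qFact q n / qFact q (n - k))

section NormalOrderCoeff

variable {q : ℂ}

theorem normalOrderCoeff_succ_zero (hq : ∀ n : ℕ, 0 < n → q ^ n ≠ 1) (m n : ℕ) :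
    normalOrderCoeff q (m + 1) n 0 = normalOrderCoeff q m n 0 * q ^ n := by
  simp only [normalOrderCoeff, qBinom_zero_right hq, Nat.sub_zero, add_mul, one_mul, pow_add]
  ring

theorem normalOrderCoeff_succ_self (hq : ∀ n : ℕ, 0 < n → q ^ n ≠ 1) {m n : ℕ} (hmn : m < n) :
    normalOrderCoeff q (m + 1) n (m + 1) = normalOrderCoeff q m n m * qInt q (n - m) := by
  obtain ⟨w, rfl⟩ : ∃ w, n = m + 1 + w := ⟨n - (m + 1), by omega⟩
  have hsub : m + 1 + w - m = w + 1 := by omega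
  simp only [normalOrderCoeff, qBinom_self hq, Nat.sub_self, zero_mul, pow_zero, one_mul, hsub,
    Nat.add_sub_cancel_left, qFact_div_qFact_succ_mul_qInt hq]

theorem normalOrderCoeff_succ_succ (hq : ∀ n : ℕ, 0 < n → q ^ n ≠ 1) {m n k : ℕ} (hk : k < m) (hmn : m ≤ n) :
    normalOrderCoeff q (m + 1) n (k + 1)
      = normalOrderCoeff q m n (k + 1) * q ^ (n - (k + 1))
        + normalOrderCoeff q m n k * qInt q (n - k) := by
  obtain ⟨u, rfl⟩ : ∃ u, m = k + 1 + u := ⟨m - (k + 1), by omega⟩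
  obtain ⟨w, rfl⟩ : ∃ w, n = k + 1 + u + w := ⟨n - (k + 1 + u), by omega⟩
  have hsub₁ : k + 1 + u + 1 - (k + 1) = u + 1 := by omega
  have hsub₂ : k + 1 + u - (k + 1) = u := by omega
  have hsub₃ : k + 1 + u - k = u + 1 := by omega
  have hsub₄ : k + 1 + u + w - (k + 1) = u + w := by omega
  have hsub₅ : k + 1 + u + w - k = u + w + 1 := by omega
  have hfact := qFact_div_qFact_succ_mul_qInt hq (k + 1 + u + w) (u + w)
  simp only [normalOrderCoeff, qBinom_succ_succ hq hk, hsub₁, hsub₂, hsub₃, hsub₄, hsub₅]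
  rw [mul_assoc _ _ (qInt q _), hfact]
  ring

end NormalOrderCoeff

section Commutation

variable {A : Type*} [Semiring A] [Algebra ℂ A] {q : ℂ} {e f : A}

theorem mul_pow_succ_of_mul_eq (h : e * f = q • (f * e) + 1) (j : ℕ) :
    e * f ^ (j + 1) = q ^ (j + 1) • (f ^ (j + 1) * e) + qInt q (j + 1) • f ^ j := by
  induction j with
  | zero => simpa [qInt] using h
  | succ j ih =>
    calc e * f ^ (j + 2) = (e * f ^ (j + 1)) * f := by rw [mul_assoc, ← pow_succ]
      _ = q ^ (j + 1) • (f ^ (j + 1) * (e * f)) + qInt q (j + 1) • f ^ (j + 1) := by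
        rw [ih, add_mul, smul_mul_assoc, smul_mul_assoc, mul_assoc, ← pow_succ]
      _ = q ^ (j + 2) • (f ^ (j + 2) * e) + qInt q (j + 2) • f ^ (j + 1) := by
        rw [h, mul_add, mul_one, mul_smul_comm, smul_add, smul_smul, ← mul_assoc, ← pow_succ,
          qInt_succ (j + 1), add_smul, ← pow_succ]
        abel

end Commutation

theorem Finset.sum_range_succ_succ_eq_add {M : Type*} [AddCommMonoid M] (u v w : ℕ → M) (m : ℕ)
    (h₀ : w 0 = u 0) (hsucc : ∀ k < m, w (k + 1) = u (k + 1) + v k) (htop : w (m + 1) = v m) :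
    ∑ k ∈ range (m + 2), w k = ∑ k ∈ range (m + 1), u k + ∑ k ∈ range (m + 1), v k := by
  rw [sum_range_succ', sum_range_succ, sum_range_succ' u, sum_range_succ v, h₀, htop,
    sum_congr rfl fun k hk => hsucc k (mem_range.mp hk), sum_add_distrib]
  abel

theorem pow_succ_mul_pow_eq_sum {A : Type*} [Semiring A] [Algebra ℂ A] {q : ℂ}
    (hq : ∀ n : ℕ, 0 < n → q ^ n ≠ 1) {e f : A} (h : e * f = q • (f * e) + 1) {m n : ℕ}
    (hmn : m < n)
    (ih : e ^ m * f ^ n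
      = ∑ k ∈ range (m + 1), normalOrderCoeff q m n k • (f ^ (n - k) * e ^ (m - k))) :
    e ^ (m + 1) * f ^ n
      = ∑ k ∈ range (m + 2), normalOrderCoeff q (m + 1) n k • (f ^ (n - k) * e ^ (m + 1 - k)) := by
  have hmove : ∀ k ≤ m, e * (f ^ (n - k) * e ^ (m - k))
      = q ^ (n - k) • (f ^ (n - k) * e ^ (m + 1 - k))
        + qInt q (n - k) • (f ^ (n - (k + 1)) * e ^ (m - k)) := by
    intro k hk
    obtain ⟨j, hj⟩ : ∃ j, n - k = j + 1 := ⟨n - (k + 1), by omega⟩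
    rw [← mul_assoc, hj, mul_pow_succ_of_mul_eq h, add_mul, smul_mul_assoc, smul_mul_assoc,
      mul_assoc, ← pow_succ', show n - (k + 1) = j by omega, show m - k + 1 = m + 1 - k by omega]
  rw [pow_succ', mul_assoc, ih, mul_sum]
  rw [sum_congr rfl fun k hk => by
    rw [mul_smul_comm, hmove k (Nat.lt_succ_iff.mp (mem_range.mp hk)), smul_add, smul_smul,
      smul_smul], sum_add_distrib]
  refine (sum_range_succ_succ_eq_add _ _ _ m ?_ (fun k hk => ?_) ?_).symm
  · rw [normalOrderCoeff_succ_zero hq, Nat.sub_zero]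
  · rw [normalOrderCoeff_succ_succ hq hk hmn.le, add_smul, Nat.add_sub_add_right]
  · rw [normalOrderCoeff_succ_self hq hmn, Nat.sub_self, Nat.sub_self]

theorem stmt4_general (q : ℂ) (hq : ∀ n : ℕ, 0 < n → q ^ n ≠ 1)
    (A : Type*) [Ring A] [Algebra ℂ A] (e f : A)
    (h : e * f = q • (f * e) + 1) (m n : ℕ) (hmn : m ≤ n) :
    e ^ m * f ^ n = ∑ k ∈ Finset.range (m + 1),
      (qBinom q m k * q ^ ((m - k) * (n - k)) * (qFact q n / qFact q (n - k))) •
        (f ^ (n - k) * e ^ (m - k)) := by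
  induction m with
  | zero => simp [qBinom_zero_right hq, div_self (qFact_ne_zero hq n)]
  | succ m ih => exact pow_succ_mul_pow_eq_sum hq h (by omega) (ih (by omega))

/-- In the algebra generated by `e`, `f` with relation `e f = q f e + 1`, for `m ≤ n`,
`eᵐ fⁿ = ∑_{k=0}^{m} binom(m,k)_q q^((m-k)(n-k)) ((n)_q!/(n-k)_q!) f^(n-k) e^(m-k)`. -/
theorem stmt4 (q : ℂ) (hq0 : q ≠ 0) (hq : ∀ n : ℕ, 0 < n → q ^ n ≠ 1)
    (A : Type*) [Ring A] [Algebra ℂ A] (e f : A)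
    (h : e * f = q • (f * e) + 1) (m n : ℕ) (hmn : m ≤ n) :
    e ^ m * f ^ n = ∑ k ∈ Finset.range (m + 1),
      (qBinom q m k * q ^ ((m - k) * (n - k)) * (qFact q n / qFact q (n - k))) •
        (f ^ (n - k) * e ^ (m - k)) :=
  stmt4_general q hq A e f h m n hmn
end

section
/- Let B be a bialgebra over a field k, and let M be a left B-Hopf module (i.e., a left B-module and left B-comodule such that the comodule structure map ρ: M → B ⊗ M is B-linear, where B ⊗ M carries the tensor product module structure). Then the map B ⊗ M^coρ → M, b ⊗ m ↦ b·m, is an isomorphism of Hopf modules, where M^coρ = {m ∈ M | ρ(m) = 1 ⊗ m} is the space of coinvariants, and B ⊗ M^coρ carries the trivial Hopf module structure (b'·(b⊗v) = b'b⊗v, ρ(b⊗v) = Δ(b)⊗v). The inverse is m ↦ ∑ m₍₋₁₎ ⊗ P(m₍₀₎) where P(m) = ∑ S(m₍₋₁₎)·m₍₀₎. -/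
open TensorProduct

variable (k : Type*) [Field k]
variable (B : Type*) [Ring B] [HopfAlgebra k B]
variable (M : Type*) [AddCommGroup M] [Module k M] [Module B M]
  [IsScalarTower k B M] [SMulCommClass k B M]

/-- The `k`-linear action map `B ⊗ M → M`, `b ⊗ m ↦ b • m`. -/
noncomputable def smulLin : B ⊗[k] M →ₗ[k] M :=
  TensorProduct.lift (LinearMap.mk₂ k (fun (b : B) (m : M) => b • m)
    (fun b b' m => add_smul b b' m) (fun c b m => smul_assoc c b m)
    (fun b m m' => smul_add b m m') (fun c b m => (smul_comm c b m).symm))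

/-- The diagonal action of `B ⊗ B` on `B ⊗ M`:
`(b₁ ⊗ b₂) ⊗ (b' ⊗ m) ↦ (b₁ b') ⊗ (b₂ • m)`. -/
noncomputable def diagAct : (B ⊗[k] B) ⊗[k] (B ⊗[k] M) →ₗ[k] B ⊗[k] M :=
  (TensorProduct.map (LinearMap.mul' k B) (smulLin k B M)) ∘ₗ
    (TensorProduct.tensorTensorTensorComm k B B B M).toLinearMap

/-!
The map `P m = ∑ S(m₍₋₁₎) • m₍₀₎` lands in the coinvariants: by compatibility and
coassociativity, `ρ (P m) = ∑ S(m₍₋₂₎)₁ m₍₋₁₎ ⊗ S(m₍₋₂₎)₂ • m₍₀₎`, which collapses to `1 ⊗ P m`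
by the identity `∑ Δ(S a₁) (a₂ ⊗ 1) = 1 ⊗ S a`. That identity holds in the convolution monoid
of linear maps `B → B ⊗ B`: there `Δ = ι₁ ⋆ ι₂` has the left inverse `(ι₂ ∘ S) ⋆ (ι₁ ∘ S)` and
the right inverse `Δ ∘ S`, so the two agree and `(Δ ∘ S) ⋆ ι₁ = ι₂ ∘ S`.

Then `m ↦ ∑ m₍₋₁₎ ⊗ P m₍₀₎` is inverse to `b ⊗ v ↦ b • v`: on one side
`∑ m₍₋₂₎ S(m₍₋₁₎) • m₍₀₎ = m` by the antipode and counit axioms; on the other, a coinvariant `v`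
has `ρ (b • v) = ∑ b₁ ⊗ b₂ • v`, so `P (b • v) = ε(b) v` and `∑ b₁ ⊗ P (b₂ • v) = b ⊗ v`.
-/

open Coalgebra WithConv

namespace HopfAlgebra

variable {R A : Type*} [CommSemiring R] [Semiring A] [HopfAlgebra R A]

lemma toConv_algHom_comp_antipode_mul {C : Type*} [Semiring C] [Algebra R C] (h : A →ₐ[R] C) :
    toConv (h.toLinearMap ∘ₗ antipode R) * toConv h.toLinearMap = 1 := by
  ext a
  rw [(ℛ R a).convMul_apply]
  simp [← map_mul, ← map_sum, sum_antipode_mul_eq_algebraMap_counit]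

open Algebra.TensorProduct (includeLeft includeRight)

local notation "ι₁" => AlgHom.toLinearMap (includeLeft (R := R) (A := A) (B := A))
local notation "ι₂" => AlgHom.toLinearMap (includeRight (R := R) (A := A) (B := A))

lemma toConv_comul_eq_includeLeft_mul_includeRight :
    toConv (comul : A →ₗ[R] A ⊗[R] A) = toConv ι₁ * toConv ι₂ := by
  ext a
  rw [(ℛ R a).convMul_apply, ← (ℛ R a).eq]
  simp [Algebra.TensorProduct.tmul_mul_tmul]

lemma toConv_comul_comp_antipode :
    toConv (comul ∘ₗ antipode R : A →ₗ[R] A ⊗[R] A) =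
      toConv (ι₂ ∘ₗ antipode R) * toConv (ι₁ ∘ₗ antipode R) := by
  refine (left_inv_eq_right_inv (M := WithConv (A →ₗ[R] A ⊗[R] A)) ?_
    LinearMap.comul_right_inv).symm
  rw [toConv_comul_eq_includeLeft_mul_includeRight, mul_assoc, ← mul_assoc (toConv (ι₁ ∘ₗ _)),
    toConv_algHom_comp_antipode_mul, one_mul, toConv_algHom_comp_antipode_mul]

lemma mul'_comp_map_comul_comp_antipode_includeLeft_comp_comul :
    LinearMap.mul' R (A ⊗[R] A) ∘ₗ map (comul ∘ₗ antipode R) ι₁ ∘ₗ comul = ι₂ ∘ₗ antipode R := by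
  have h : toConv (comul ∘ₗ antipode R) * toConv ι₁ = toConv (ι₂ ∘ₗ antipode R) := by
    rw [toConv_comul_comp_antipode, mul_assoc, toConv_algHom_comp_antipode_mul, mul_one]
  exact congrArg ofConv h

end HopfAlgebra

namespace HopfModule

open LinearMap

variable {k B M} {ρ : M →ₗ[k] B ⊗[k] M}

local notation "S" => HopfAlgebra.antipode k (A := B)

@[simp] lemma smulLin_tmul (b : B) (m : M) : smulLin k B M (b ⊗ₜ m) = b • m := rfl

lemma diagAct_comp_rTensor_comp_assoc (F : B →ₗ[k] B ⊗[k] B) :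
    diagAct k B M ∘ₗ rTensor (B ⊗[k] M) F ∘ₗ (TensorProduct.assoc k B B M).toLinearMap =
      lTensor B (smulLin k B M) ∘ₗ (TensorProduct.assoc k B B M).toLinearMap ∘ₗ
        rTensor M (mul' k (B ⊗[k] B) ∘ₗ map F Algebra.TensorProduct.includeLeft.toLinearMap) := by
  have hdiag : diagAct k B M = lTensor B (smulLin k B M) ∘ₗ
      (TensorProduct.assoc k B B M).toLinearMap ∘ₗ
      rTensor M (mul' k (B ⊗[k] B) ∘ₗ
        lTensor (B ⊗[k] B) Algebra.TensorProduct.includeLeft.toLinearMap) ∘ₗ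
      (TensorProduct.assoc k (B ⊗[k] B) B M).symm.toLinearMap := by
    ext u v y n
    simp [diagAct, Algebra.TensorProduct.tmul_mul_tmul]
  rw [hdiag]
  simp only [comp_assoc]
  congr 2
  ext u v n
  simp

lemma diagAct_comp_comul_comp_antipode :
    diagAct k B M ∘ₗ rTensor (B ⊗[k] M) (comul ∘ₗ S) ∘ₗ
        (TensorProduct.assoc k B B M).toLinearMap ∘ₗ rTensor M comul =
      TensorProduct.mk k B M 1 ∘ₗ smulLin k B M ∘ₗ rTensor M S := by
  calc _ = (diagAct k B M ∘ₗ rTensor (B ⊗[k] M) (comul ∘ₗ S) ∘ₗ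
          (TensorProduct.assoc k B B M).toLinearMap) ∘ₗ rTensor M comul := by
        simp only [comp_assoc]
    _ = lTensor B (smulLin k B M) ∘ₗ (TensorProduct.assoc k B B M).toLinearMap ∘ₗ
          rTensor M (mul' k (B ⊗[k] B) ∘ₗ
            map (comul ∘ₗ S) Algebra.TensorProduct.includeLeft.toLinearMap ∘ₗ comul) := by
        rw [diagAct_comp_rTensor_comp_assoc]
        simp only [comp_assoc, rTensor_comp]
    _ = lTensor B (smulLin k B M) ∘ₗ (TensorProduct.assoc k B B M).toLinearMap ∘ₗ
          rTensor M (Algebra.TensorProduct.includeRight.toLinearMap ∘ₗ S) := by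
        rw [HopfAlgebra.mul'_comp_map_comul_comp_antipode_includeLeft_comp_comul]
    _ = _ := by
        ext b n
        simp

lemma smulLin_lTensor_antipode_comul (x : B ⊗[k] M) :
    smulLin k B M (lTensor B (smulLin k B M ∘ₗ rTensor M S)
        (TensorProduct.assoc k B B M (rTensor M comul x))) =
      TensorProduct.lid k M (rTensor M counit x) := by
  have hassoc : smulLin k B M ∘ₗ lTensor B (smulLin k B M ∘ₗ rTensor M S) ∘ₗ
      (TensorProduct.assoc k B B M).toLinearMap =
        smulLin k B M ∘ₗ rTensor M (mul' k B ∘ₗ lTensor B S) := by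
    ext u v n
    simp [mul_smul]
  have h : smulLin k B M ∘ₗ lTensor B (smulLin k B M ∘ₗ rTensor M S) ∘ₗ
      (TensorProduct.assoc k B B M).toLinearMap ∘ₗ rTensor M comul =
        TensorProduct.lid k M ∘ₗ rTensor M counit := by
    calc _ = (smulLin k B M ∘ₗ lTensor B (smulLin k B M ∘ₗ rTensor M S) ∘ₗ
          (TensorProduct.assoc k B B M).toLinearMap) ∘ₗ rTensor M comul := by
          simp only [comp_assoc]
      _ = smulLin k B M ∘ₗ rTensor M (mul' k B ∘ₗ lTensor B S ∘ₗ comul) := by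
          rw [hassoc, comp_assoc, ← rTensor_comp, comp_assoc]
      _ = _ := by
          rw [HopfAlgebra.mul_antipode_lTensor_comul]
          ext b n
          simp
  exact LinearMap.congr_fun h x

noncomputable def antipodeProj (ρ : M →ₗ[k] B ⊗[k] M) : M →ₗ[k] M :=
  smulLin k B M ∘ₗ rTensor M S ∘ₗ ρ

def coinvariants (ρ : M →ₗ[k] B ⊗[k] M) : Submodule k M :=
  LinearMap.eqLocus ρ (TensorProduct.mk k B M 1)

lemma rho_smulLin
    (hcompat : ∀ (b : B) (m : M), ρ (b • m) = diagAct k B M (comul b ⊗ₜ ρ m)) (x : B ⊗[k] M) :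
    ρ (smulLin k B M x) = diagAct k B M (map comul ρ x) := by
  have h : ρ ∘ₗ smulLin k B M = diagAct k B M ∘ₗ map comul ρ := by
    ext b m
    simp [hcompat]
  exact LinearMap.congr_fun h x

lemma rho_antipodeProj
    (hcoassoc : ∀ m : M, rTensor M comul (ρ m) =
      (TensorProduct.assoc k B B M).symm (lTensor B ρ (ρ m)))
    (hcompat : ∀ (b : B) (m : M), ρ (b • m) = diagAct k B M (comul b ⊗ₜ ρ m)) (m : M) :
    ρ (antipodeProj ρ m) = 1 ⊗ₜ antipodeProj ρ m :=
  calc ρ (antipodeProj ρ m) = diagAct k B M (map comul ρ (rTensor M S (ρ m))) :=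
        rho_smulLin hcompat _
    _ = diagAct k B M (rTensor (B ⊗[k] M) (comul ∘ₗ S) (lTensor B ρ (ρ m))) := by
        rw [← comp_apply (map comul ρ), map_comp_rTensor, ← rTensor_comp_lTensor, comp_apply]
    _ = 1 ⊗ₜ antipodeProj ρ m := by
        rw [← LinearEquiv.apply_symm_apply (TensorProduct.assoc k B B M) (lTensor B ρ (ρ m)),
          ← hcoassoc]
        exact LinearMap.congr_fun diagAct_comp_comul_comp_antipode (ρ m)

lemma smulLin_lTensor_antipodeProj_rho
    (hcounit : ∀ m : M, TensorProduct.lid k M (rTensor M counit (ρ m)) = m)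
    (hcoassoc : ∀ m : M, rTensor M comul (ρ m) =
      (TensorProduct.assoc k B B M).symm (lTensor B ρ (ρ m))) (m : M) :
    smulLin k B M (lTensor B (antipodeProj ρ) (ρ m)) = m := by
  rw [antipodeProj, ← comp_assoc, lTensor_comp, comp_apply,
    ← LinearEquiv.apply_symm_apply (TensorProduct.assoc k B B M) (lTensor B ρ (ρ m)), ← hcoassoc,
    smulLin_lTensor_antipode_comul, hcounit]

lemma rho_smul_of_mem_coinvariants
    (hcompat : ∀ (b : B) (m : M), ρ (b • m) = diagAct k B M (comul b ⊗ₜ ρ m))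
    {v : M} (hv : v ∈ coinvariants ρ) (b : B) :
    ρ (b • v) = lTensor B ((toSpanSingleton B M v).restrictScalars k) (comul b) := by
  have h : diagAct k B M ∘ₗ (TensorProduct.mk k (B ⊗[k] B) (B ⊗[k] M)).flip (1 ⊗ₜ v) =
      lTensor B ((toSpanSingleton B M v).restrictScalars k) := by
    ext u w
    simp [diagAct]
  rw [hcompat, show ρ v = 1 ⊗ₜ v from hv]
  exact LinearMap.congr_fun h (comul b)

lemma antipodeProj_smul_of_mem_coinvariants
    (hcompat : ∀ (b : B) (m : M), ρ (b • m) = diagAct k B M (comul b ⊗ₜ ρ m))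
    {v : M} (hv : v ∈ coinvariants ρ) (b : B) :
    antipodeProj ρ (b • v) = counit (R := k) b • v := by
  have h : smulLin k B M ∘ₗ rTensor M S ∘ₗ lTensor B ((toSpanSingleton B M v).restrictScalars k) =
      (toSpanSingleton B M v).restrictScalars k ∘ₗ mul' k B ∘ₗ rTensor B S := by
    ext u w
    simp [mul_smul]
  rw [antipodeProj, comp_apply, comp_apply, rho_smul_of_mem_coinvariants hcompat hv,
    ← comp_apply (rTensor M S), ← comp_apply (smulLin k B M), h]
  simp [HopfAlgebra.mul_antipode_rTensor_comul_apply]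

lemma lTensor_antipodeProj_rho_smul_of_mem_coinvariants
    (hcompat : ∀ (b : B) (m : M), ρ (b • m) = diagAct k B M (comul b ⊗ₜ ρ m))
    {v : M} (hv : v ∈ coinvariants ρ) (b : B) :
    lTensor B (antipodeProj ρ) (ρ (b • v)) = b ⊗ₜ v := by
  have h : antipodeProj ρ ∘ₗ (toSpanSingleton B M v).restrictScalars k =
      toSpanSingleton k M v ∘ₗ counit := by
    ext u
    simp [antipodeProj_smul_of_mem_coinvariants hcompat hv]
  rw [rho_smul_of_mem_coinvariants hcompat hv, ← comp_apply, ← lTensor_comp, h, lTensor_comp,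
    comp_apply, lTensor_counit_comul]
  simp

theorem bijective_smulLin_lTensor_coinvariants
    (hcounit : ∀ m : M, TensorProduct.lid k M (rTensor M counit (ρ m)) = m)
    (hcoassoc : ∀ m : M, rTensor M comul (ρ m) =
      (TensorProduct.assoc k B B M).symm (lTensor B ρ (ρ m)))
    (hcompat : ∀ (b : B) (m : M), ρ (b • m) = diagAct k B M (comul b ⊗ₜ ρ m)) :
    Function.Bijective (smulLin k B M ∘ₗ lTensor B (coinvariants ρ).subtype) := by
  let P' := (antipodeProj ρ).codRestrict (coinvariants ρ) (rho_antipodeProj hcoassoc hcompat)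
  have hP' (x : B ⊗[k] M) :
      lTensor B (coinvariants ρ).subtype (lTensor B P' x) = lTensor B (antipodeProj ρ) x := by
    rw [← comp_apply (lTensor B _), ← lTensor_comp]
    rfl
  have hleft : (lTensor B P' ∘ₗ ρ) ∘ₗ smulLin k B M ∘ₗ lTensor B (coinvariants ρ).subtype =
      LinearMap.id := by
    refine TensorProduct.ext' fun b v => ?_
    apply Module.Flat.lTensor_preserves_injective_linearMap _ (coinvariants ρ).injective_subtype
    simpa [hP'] using lTensor_antipodeProj_rho_smul_of_mem_coinvariants hcompat v.2 b
  have hright : (smulLin k B M ∘ₗ lTensor B (coinvariants ρ).subtype) ∘ₗ lTensor B P' ∘ₗ ρ =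
      LinearMap.id := by
    ext m
    simpa [hP'] using smulLin_lTensor_antipodeProj_rho hcounit hcoassoc m
  exact Function.bijective_iff_has_inverse.mpr
    ⟨lTensor B P' ∘ₗ ρ, LinearMap.congr_fun hleft, LinearMap.congr_fun hright⟩

end HopfModule

/-- Fundamental theorem of Hopf modules. Let `B` be a Hopf algebra over `k` and `M` a
left `B`-Hopf module, i.e. a `B`-module and `B`-comodule with structure map
`ρ : M → B ⊗ M` (counital, coassociative) satisfying the compatibility
`ρ(b·m) = ∑ b₍₁₎m₍₋₁₎ ⊗ b₍₂₎·m₍₀₎`. Then with `M^coρ = {m | ρ(m) = 1 ⊗ m}` the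
coinvariants, the map `φ : B ⊗ M^coρ → M`, `b ⊗ m ↦ b·m` is bijective, it is a map of
Hopf modules for the trivial Hopf module structure on `B ⊗ M^coρ` (in particular
`b'·(b ⊗ v) ↦ b'·φ(b ⊗ v)`), and its inverse is `m ↦ ∑ m₍₋₁₎ ⊗ P(m₍₀₎)` where
`P(m) = ∑ S(m₍₋₁₎)·m₍₀₎`: indeed `P` lands in `M^coρ` and `∑ m₍₋₁₎ · P(m₍₀₎) = m`. -/
theorem stmt5 (ρ : M →ₗ[k] B ⊗[k] M)
    (hcounit : ∀ m : M,
      (TensorProduct.lid k M)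
        ((LinearMap.rTensor M (Coalgebra.counit (R := k) (A := B))) (ρ m)) = m)
    (hcoassoc : ∀ m : M,
      (LinearMap.rTensor M (Coalgebra.comul (R := k) (A := B))) (ρ m) =
        (TensorProduct.assoc k B B M).symm ((LinearMap.lTensor B ρ) (ρ m)))
    (hcompat : ∀ (b : B) (m : M),
      ρ (b • m) = diagAct k B M ((Coalgebra.comul (R := k) (A := B)) b ⊗ₜ ρ m)) :
    let coinv : Submodule k M :=
      { carrier := {m : M | ρ m = (1 : B) ⊗ₜ m}
        add_mem' := fun ha hb => by
          simp only [Set.mem_setOf_eq] at *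
          rw [map_add, ha, hb, TensorProduct.tmul_add]
        zero_mem' := by simp
        smul_mem' := fun c m hm => by
          simp only [Set.mem_setOf_eq] at *
          rw [map_smul, hm, TensorProduct.tmul_smul] }
    let φ : B ⊗[k] coinv →ₗ[k] M := (smulLin k B M) ∘ₗ (LinearMap.lTensor B coinv.subtype)
    let P : M →ₗ[k] M := (smulLin k B M) ∘ₗ
      (LinearMap.rTensor M (HopfAlgebra.antipode (R := k) (A := B))) ∘ₗ ρ
    Function.Bijective φ ∧
      (∀ (b' b : B) (v : coinv), φ ((b' * b) ⊗ₜ v) = b' • φ (b ⊗ₜ v)) ∧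
      (∀ m : M, P m ∈ coinv) ∧
      (∀ m : M, (smulLin k B M) ((LinearMap.lTensor B P) (ρ m)) = m) := by
  intro coinv φ P
  exact ⟨HopfModule.bijective_smulLin_lTensor_coinvariants hcounit hcoassoc hcompat,
    fun b' b v => mul_smul b' b (v : M), HopfModule.rho_antipodeProj hcoassoc hcompat,
    HopfModule.smulLin_lTensor_antipodeProj_rho hcounit hcoassoc⟩
end

section
/- Let q ∈ ℂ* not a root of unity, W = ⟨e, f | ef = qfe + 1⟩, and let M be a W-module on which e acts locally nilpotently. Then every element of M lies in the W-submodule generated by ker(e): M = ∑_{n≥0} fⁿ·K(M), where K(M) = {m ∈ M | e·m = 0}. -/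
/-- Let `q` not be a root of unity, `W = ⟨e,f | ef = qfe + 1⟩`, and `M` a `W`-module on
which `e` acts locally nilpotently. Then every element of `M` lies in the submodule
generated by `ker e`: `M = ∑_{n≥0} fⁿ·K(M)` where `K(M) = {m | e·m = 0}`. -/
theorem stmt15 (q : ℂ) (hq0 : q ≠ 0) (hq : ∀ n : ℕ, 0 < n → q ^ n ≠ 1)
    (A : Type*) [Ring A] [Algebra ℂ A] (e f : A)
    (h : e * f = q • (f * e) + 1)
    (M : Type*) [AddCommGroup M] [Module ℂ M] [Module A M] [IsScalarTower ℂ A M]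
    (hnil : ∀ m : M, ∃ l : ℕ, (e ^ l) • m = 0) :
    ∀ m : M, m ∈ Submodule.span ℂ
      {x : M | ∃ (n : ℕ) (v : M), e • v = 0 ∧ x = (f ^ n) • v} := by
  set S := Submodule.span ℂ {x : M | ∃ (n : ℕ) (v : M), e • v = 0 ∧ x = (f ^ n) • v} with hS
  -- scalar commutation
  have hsc : ∀ (c : ℂ) (a : A) (y : M), a • (c • y) = c • (a • y) := by
    intro c a y
    have h1 : c • y = (c • (1:A)) • y := by rw [smul_assoc, one_smul]
    rw [h1, ← mul_smul, mul_smul_comm, mul_one, smul_assoc]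
  -- q-integers
  set C : ℕ → ℂ := fun n => ∑ i ∈ Finset.range n, q ^ i with hC
  have hq1 : q ≠ 1 := fun hq1 => hq 1 one_pos (by simp [hq1])
  have hCne : ∀ n : ℕ, C (n+1) ≠ 0 := by
    intro n hzero
    have h2 : C (n+1) * (q - 1) = q ^ (n+1) - 1 := geom_sum_mul q (n+1)
    rw [hzero, zero_mul] at h2
    exact hq (n+1) n.succ_pos (sub_eq_zero.mp h2.symm)
  -- commutation relation
  have hcomm : ∀ n : ℕ, e * f ^ (n+1) = q ^ (n+1) • (f ^ (n+1) * e) + C (n+1) • f ^ n := by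
    intro n
    induction n with
    | zero => simp [h, hC]
    | succ n ih =>
      have h3 : e * f ^ (n+2) = (e * f ^ (n+1)) * f := by rw [pow_succ, ← mul_assoc]
      rw [h3, ih, add_mul, smul_mul_assoc, smul_mul_assoc, mul_assoc, ← pow_succ, h,
        mul_add, mul_one, mul_smul_comm, smul_add, smul_smul, ← mul_assoc, ← pow_succ,
        ← pow_succ]
      have hCs : C (n+2) = C (n+1) + q ^ (n+1) := Finset.sum_range_succ _ _
      rw [hCs, add_smul]
      abel
  -- integration lemma
  have key : ∀ x ∈ S, ∃ y ∈ S, e • y = x := by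
    intro x hx
    induction hx using Submodule.span_induction with
    | mem x hx =>
      obtain ⟨n, v, hv, rfl⟩ := hx
      refine ⟨(C (n+1))⁻¹ • ((f ^ (n+1)) • v), ?_, ?_⟩
      · exact Submodule.smul_mem _ _ (Submodule.subset_span ⟨n+1, v, hv, rfl⟩)
      · have h1 : e • ((f ^ (n+1)) • v) = C (n+1) • ((f ^ n) • v) := by
          rw [← mul_smul, hcomm n, add_smul, smul_assoc, smul_assoc, mul_smul, hv,
            smul_zero, smul_zero, zero_add]
        rw [hsc, h1, smul_smul, inv_mul_cancel₀ (hCne n), one_smul]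
    | zero => exact ⟨0, Submodule.zero_mem _, by simp⟩
    | add x y _ _ hx hy =>
      obtain ⟨a, ha, hae⟩ := hx
      obtain ⟨b, hb, hbe⟩ := hy
      exact ⟨a + b, Submodule.add_mem _ ha hb, by rw [smul_add, hae, hbe]⟩
    | smul c x _ hx =>
      obtain ⟨a, ha, hae⟩ := hx
      exact ⟨c • a, Submodule.smul_mem _ _ ha, by rw [hsc, hae]⟩
  -- main induction
  have main : ∀ (l : ℕ) (m : M), (e ^ l) • m = 0 → m ∈ S := by
    intro l
    induction l with
    | zero =>
      intro m hm
      rw [pow_zero, one_smul] at hm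
      rw [hm]; exact Submodule.zero_mem _
    | succ l ih =>
      intro m hm
      have hem : (e ^ l) • (e • m) = 0 := by
        rw [← mul_smul, ← pow_succ]; exact hm
      obtain ⟨y, hy, hye⟩ := key (e • m) (ih _ hem)
      have hmy : m - y ∈ S :=
        Submodule.subset_span ⟨0, m - y, by rw [smul_sub, hye, sub_self], by simp⟩
      have := Submodule.add_mem _ hmy hy
      simpa using this
  intro m
  obtain ⟨l, hl⟩ := hnil m
  exact main l m hl
end
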